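/- arXiv:1602.06657 — 4 statements merged into one kernel-verified Lean document; each statement's English description precedes it below -/
import Mathlib

section
/- For every n ≥ 1 and all real numbers 0 ≤ μ₁ ≤ μ₂ ≤ ⋯ ≤ μₙ ≤ 1, the maximum resource utilization expression 2(μ₁μ₂ + μ₂μ₃ + ⋯ + μₙ₋₁μₙ + μₙ) − 2(μ₁² + μ₂² + ⋯ + μₙ²) is at most n/(n+1). -/
/-!
Pad the utilization points with `μ₀ = 0` and `μₙ₊₁ = 1`. Expanding squares shows that the
utilization equals `1 - ∑ᵢ (μᵢ₊₁ - μᵢ)²`, a sum of `n + 1` squared increments whose sum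
telescopes to `1`. By Cauchy–Schwarz the squared increments add up to at least `1 / (n + 1)`.
-/

open Finset

lemma sq_sub_le_mul_sum_sq_sub (f : ℕ → ℝ) (m : ℕ) :
    (f m - f 0) ^ 2 ≤ m * ∑ i ∈ range m, (f (i + 1) - f i) ^ 2 := by
  have h := sq_sum_le_card_mul_sum_sq (s := range m) (f := fun i ↦ f (i + 1) - f i)
  rwa [sum_range_sub, card_range] at h

lemma utilization_eq_one_sub_sum_sq (μ : ℕ → ℝ) {n : ℕ} (hn : 1 ≤ n) :
    2 * ((∑ i ∈ Ico 1 n, μ i * μ (i + 1)) + μ n) - 2 * ∑ i ∈ Icc 1 n, μ i ^ 2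
      = 1 - (μ 1 ^ 2 + ∑ i ∈ Ico 1 n, (μ (i + 1) - μ i) ^ 2 + (1 - μ n) ^ 2) := by
  induction n, hn using Nat.le_induction with
  | base =>
    simp only [Ico_self, sum_empty, Icc_self, sum_singleton]
    ring
  | succ n hn ih =>
    rw [sum_Ico_succ_top hn, sum_Ico_succ_top hn, sum_Icc_succ_top (by omega)]
    linarith

lemma one_le_mul_sum_sq_increments (μ : ℕ → ℝ) {n : ℕ} (hn : 1 ≤ n) :
    1 ≤ (n + 1) * (μ 1 ^ 2 + ∑ i ∈ Ico 1 n, (μ (i + 1) - μ i) ^ 2 + (1 - μ n) ^ 2) := by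
  set ν : ℕ → ℝ := fun i ↦ if i = 0 then 0 else if i ≤ n then μ i else 1
  have hν : ∀ i ∈ Icc 1 n, ν i = μ i := fun i hi ↦ by
    simp only [mem_Icc] at hi
    simp [ν, hi.2, show i ≠ 0 by omega]
  have h0 : ν 0 = 0 := by simp [ν]
  have h1 : ν (n + 1) = 1 := by simp [ν]
  have h_incr : ∑ i ∈ range (n + 1), (ν (i + 1) - ν i) ^ 2
      = μ 1 ^ 2 + ∑ i ∈ Ico 1 n, (μ (i + 1) - μ i) ^ 2 + (1 - μ n) ^ 2 := by
    rw [sum_range_succ, range_eq_Ico, sum_eq_sum_Ico_succ_bot (by omega)]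
    have h_mid : ∀ i ∈ Ico 1 n, (ν (i + 1) - ν i) ^ 2 = (μ (i + 1) - μ i) ^ 2 := fun i hi ↦ by
      simp only [mem_Ico] at hi
      rw [hν i (mem_Icc.2 ⟨hi.1, hi.2.le⟩), hν (i + 1) (mem_Icc.2 ⟨by omega, hi.2⟩)]
    rw [zero_add, sum_congr rfl h_mid, h0, h1, hν 1 (mem_Icc.2 ⟨le_rfl, hn⟩),
      hν n (mem_Icc.2 ⟨hn, le_rfl⟩)]
    ring
  simpa [h_incr, h0, h1] using sq_sub_le_mul_sum_sq_sub ν (n + 1)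

theorem stmt1_general (n : ℕ) (hn : 1 ≤ n) (μ : ℕ → ℝ) :
    2 * ((∑ i ∈ Finset.Ico 1 n, μ i * μ (i + 1)) + μ n)
      - 2 * ∑ i ∈ Finset.Icc 1 n, (μ i) ^ 2 ≤ (n : ℝ) / (n + 1) := by
  rw [utilization_eq_one_sub_sum_sq μ hn, le_div_iff₀ (by positivity)]
  nlinarith [one_le_mul_sum_sq_increments μ hn]

/-- For every `n ≥ 1` and all reals `0 ≤ μ₁ ≤ ⋯ ≤ μₙ ≤ 1`, the maximum
resource utilization `2(μ₁μ₂ + ⋯ + μ_{n-1}μₙ + μₙ) − 2(μ₁² + ⋯ + μₙ²)` is at most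
`n / (n + 1)`. -/
theorem stmt1 (n : ℕ) (hn : 1 ≤ n) (μ : ℕ → ℝ)
    (h0 : 0 ≤ μ 1)
    (hmono : ∀ i, 1 ≤ i → i < n → μ i ≤ μ (i + 1))
    (hlast : μ n ≤ 1) :
    2 * ((∑ i ∈ Finset.Ico 1 n, μ i * μ (i + 1)) + μ n)
      - 2 * ∑ i ∈ Finset.Icc 1 n, (μ i) ^ 2 ≤ (n : ℝ) / (n + 1) :=
  stmt1_general n hn μ
end

section
/- For n ≥ 1 and real numbers 0 ≤ μ₁ ≤ μ₂ ≤ ⋯ ≤ μₙ ≤ 1, the expression 2(μ₁μ₂ + μ₂μ₃ + ⋯ + μₙ₋₁μₙ + μₙ) − 2(μ₁² + ⋯ + μₙ²) equals its maximum value n/(n+1) if and only if the utilization points are uniformly spaced, i.e. μᵢ = i/(n+1) for every i = 1, …, n. -/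
/-!
Pad the utilization points with `μ₀ = 0` and `μₙ₊₁ = 1`. The expression is then `1 - ∑ dᵢ²`,
where `d₀, …, dₙ` are the `n + 1` gaps between consecutive points. The gaps sum to `1`, so
`∑ dᵢ² = 1/(n+1) + ∑ (dᵢ - 1/(n+1))²`: the expression is `n/(n+1)` exactly when all gaps
equal `1/(n+1)`, i.e. when the points are uniformly spaced.
-/

open Finset

lemma sum_range_succ_sub_sq {R : Type*} [CommRing R] (ν : ℕ → R) (m : ℕ) :
    ∑ i ∈ range (m + 1), (ν (i + 1) - ν i) ^ 2
      = ν (m + 1) ^ 2 + ν 0 ^ 2 + 2 * ∑ i ∈ Icc 1 m, ν i ^ 2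
        - 2 * ∑ i ∈ range (m + 1), ν i * ν (i + 1) := by
  induction m with
  | zero =>
    simp only [zero_add, range_one, sum_singleton, Icc_eq_empty_of_lt one_pos, sum_empty]
    ring
  | succ m ih =>
    rw [sum_range_succ, ih, sum_range_succ _ (m + 1),
      sum_Icc_succ_top (by omega)]
    ring

lemma sum_sub_mean_sq {ι K : Type*} [Field K] [CharZero K] (s : Finset ι) (d : ι → K) :
    ∑ i ∈ s, (d i - (∑ j ∈ s, d j) / #s) ^ 2
      = ∑ i ∈ s, d i ^ 2 - (∑ i ∈ s, d i) ^ 2 / #s := by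
  rcases s.eq_empty_or_nonempty with rfl | hs
  · simp
  have hcard : (#s : K) ≠ 0 := Nat.cast_ne_zero.mpr hs.card_pos.ne'
  simp only [sub_sq, sum_add_distrib, sum_sub_distrib, ← sum_mul, ← mul_sum, sum_const,
    nsmul_eq_mul]
  field_simp
  ring

lemma sum_sq_eq_sq_sum_div_card_iff {ι K : Type*} [Field K] [LinearOrder K]
    [IsStrictOrderedRing K] (s : Finset ι) (d : ι → K) :
    ∑ i ∈ s, d i ^ 2 = (∑ i ∈ s, d i) ^ 2 / #s ↔ ∀ i ∈ s, d i = (∑ j ∈ s, d j) / #s := by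
  rw [← sub_eq_zero, ← sum_sub_mean_sq, sum_eq_zero_iff_of_nonneg fun _ _ => sq_nonneg _]
  simp only [sq_eq_zero_iff, sub_eq_zero]

lemma forall_sub_eq_iff_forall_eq_mul {R : Type*} [Ring R] {ν : ℕ → R} (h0 : ν 0 = 0)
    (c : R) (m : ℕ) : (∀ i < m, ν (i + 1) - ν i = c) ↔ ∀ i ≤ m, ν i = i * c := by
  constructor
  · intro h i hi
    induction i with
    | zero => simp [h0]
    | succ i ih =>
      rw [← sub_add_cancel (ν (i + 1)) (ν i), h i (by omega), ih (by omega)]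
      push_cast
      noncomm_ring
  · intro h i hi
    rw [h (i + 1) hi, h i hi.le]
    push_cast
    noncomm_ring

def withEndpoints (n : ℕ) (μ : ℕ → ℝ) (i : ℕ) : ℝ :=
  if i = 0 then 0 else if i ≤ n then μ i else 1

section withEndpoints

variable {n : ℕ} {μ : ℕ → ℝ}

@[simp] lemma withEndpoints_zero : withEndpoints n μ 0 = 0 := rfl

@[simp] lemma withEndpoints_succ_self : withEndpoints n μ (n + 1) = 1 := by
  simp [withEndpoints]

lemma withEndpoints_of_mem_Icc {i : ℕ} (hi : i ∈ Icc 1 n) : withEndpoints n μ i = μ i := by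
  rw [mem_Icc] at hi
  simp [withEndpoints, hi.2, Nat.one_le_iff_ne_zero.mp hi.1]

lemma sum_range_withEndpoints_gaps :
    ∑ i ∈ range (n + 1), (withEndpoints n μ (i + 1) - withEndpoints n μ i) = 1 := by
  rw [sum_range_sub]
  simp

lemma utilization_eq_one_sub_sum_sq_gaps (hn : 1 ≤ n) :
    2 * ((∑ i ∈ Ico 1 n, μ i * μ (i + 1)) + μ n) - 2 * ∑ i ∈ Icc 1 n, μ i ^ 2
      = 1 - ∑ i ∈ range (n + 1), (withEndpoints n μ (i + 1) - withEndpoints n μ i) ^ 2 := by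
  have hsq : ∑ i ∈ Icc 1 n, withEndpoints n μ i ^ 2 = ∑ i ∈ Icc 1 n, μ i ^ 2 :=
    sum_congr rfl fun i hi => by rw [withEndpoints_of_mem_Icc hi]
  have hprod : ∑ i ∈ range (n + 1), withEndpoints n μ i * withEndpoints n μ (i + 1)
      = (∑ i ∈ Ico 1 n, μ i * μ (i + 1)) + μ n := by
    rw [range_eq_Ico, sum_eq_sum_Ico_succ_bot (by omega), sum_Ico_succ_top hn,
      withEndpoints_of_mem_Icc (mem_Icc.mpr ⟨hn, le_rfl⟩)]
    have hmid : ∀ i ∈ Ico 1 n,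
        withEndpoints n μ i * withEndpoints n μ (i + 1) = μ i * μ (i + 1) := fun i hi => by
      rw [mem_Ico] at hi
      rw [withEndpoints_of_mem_Icc (mem_Icc.mpr ⟨hi.1, hi.2.le⟩),
        withEndpoints_of_mem_Icc (mem_Icc.mpr ⟨by omega, hi.2⟩)]
    simp [sum_congr rfl hmid]
  rw [sum_range_succ_sub_sq, hsq, hprod, withEndpoints_zero, withEndpoints_succ_self]
  ring

lemma forall_withEndpoints_eq_div_iff :
    (∀ i ≤ n + 1, withEndpoints n μ i = i * (1 / (n + 1)))
      ↔ ∀ i ∈ Icc 1 n, μ i = (i : ℝ) / (n + 1) := by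
  have hn : (n : ℝ) + 1 ≠ 0 := by positivity
  constructor
  · intro h i hi
    rw [← withEndpoints_of_mem_Icc (μ := μ) hi, h i (by rw [mem_Icc] at hi; omega), mul_one_div]
  · intro h i hi
    rcases Nat.eq_zero_or_pos i with rfl | hpos
    · simp
    rcases hi.lt_or_eq with hlt | rfl
    · have hi' : i ∈ Icc 1 n := mem_Icc.mpr ⟨hpos, by omega⟩
      rw [withEndpoints_of_mem_Icc hi', h i hi', mul_one_div]
    · simp [hn]

end withEndpoints

theorem stmt2_general (n : ℕ) (hn : 1 ≤ n) (μ : ℕ → ℝ) :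
    (2 * ((∑ i ∈ Finset.Ico 1 n, μ i * μ (i + 1)) + μ n)
        - 2 * ∑ i ∈ Finset.Icc 1 n, (μ i) ^ 2 = (n : ℝ) / (n + 1))
      ↔ (∀ i ∈ Finset.Icc 1 n, μ i = (i : ℝ) / (n + 1)) := by
  set d := fun i => withEndpoints n μ (i + 1) - withEndpoints n μ i
  have hsum : ∑ i ∈ range (n + 1), d i = 1 := sum_range_withEndpoints_gaps
  have hn' : (n : ℝ) + 1 ≠ 0 := by positivity
  rw [utilization_eq_one_sub_sum_sq_gaps hn, ← forall_withEndpoints_eq_div_iff,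
    ← forall_sub_eq_iff_forall_eq_mul withEndpoints_zero]
  calc 1 - ∑ i ∈ range (n + 1), d i ^ 2 = n / (n + 1)
      ↔ ∑ i ∈ range (n + 1), d i ^ 2 = (∑ i ∈ range (n + 1), d i) ^ 2 / #(range (n + 1)) := by
        rw [hsum, card_range]; push_cast
        constructor <;> intro h <;> field_simp at h ⊢ <;> linarith
    _ ↔ ∀ i < n + 1, d i = 1 / (n + 1) := by
        rw [sum_sq_eq_sq_sum_div_card_iff, hsum, card_range]; simp

/-- For `n ≥ 1` and reals `0 ≤ μ₁ ≤ ⋯ ≤ μₙ ≤ 1`, the expression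
`2(μ₁μ₂ + ⋯ + μ_{n-1}μₙ + μₙ) − 2(μ₁² + ⋯ + μₙ²)` equals its maximum value
`n / (n + 1)` if and only if `μ i = i / (n + 1)` for every `i = 1, …, n`. -/
theorem stmt2 (n : ℕ) (hn : 1 ≤ n) (μ : ℕ → ℝ)
    (h0 : 0 ≤ μ 1)
    (hmono : ∀ i, 1 ≤ i → i < n → μ i ≤ μ (i + 1))
    (hlast : μ n ≤ 1) :
    (2 * ((∑ i ∈ Finset.Ico 1 n, μ i * μ (i + 1)) + μ n)
        - 2 * ∑ i ∈ Finset.Icc 1 n, (μ i) ^ 2 = (n : ℝ) / (n + 1))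
      ↔ (∀ i ∈ Finset.Icc 1 n, μ i = (i : ℝ) / (n + 1)) :=
  stmt2_general n hn μ
end

section
/- Let V be a finite type and f : Finset V → ℝ a monotone (S ⊆ T implies f(S) ≤ f(T)) submodular set function with f(∅) = 0. Fix b ≥ 1 and let the greedy sequence be S₀ = ∅ and, for each t < b, S_{t+1} = S_t ∪ {v_t} where v_t maximizes f(S_t ∪ {v}) over all v. Then for every T ⊆ V with |T| = b, f(S_b) ≥ (1 − 1/e) · f(T). -/
/-!
Let `T` have `b` elements. By submodularity, adding all of `T` to the current greedy set
`A` gains at most the sum of the `b` single-element gains, each at most the greedy gain;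
so the gap `f T - f A` shrinks by a factor `1 - 1/b` per greedy step, and after `b` steps it
is at most `(1 - 1/b)^b f T ≤ e⁻¹ f T`.
-/

open Finset

section Submodular

variable {V : Type*} [DecidableEq V] (f : Finset V → ℝ)

theorem le_add_sum_marginal_of_submodular
    (hsub : ∀ S T : Finset V, S ⊆ T → ∀ v : V, f (insert v S) + f T ≥ f (insert v T) + f S)
    (A B : Finset V) : f (A ∪ B) ≤ f A + ∑ v ∈ B, (f (insert v A) - f A) := by
  induction B using Finset.induction_on with
  | empty => simp
  | insert v B hv ih =>
    have := hsub A (A ∪ B) subset_union_left v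
    rw [union_insert, sum_insert hv]
    linarith

theorem sub_le_card_mul_greedy_gain
    (hmono : ∀ S T : Finset V, S ⊆ T → f S ≤ f T)
    (hsub : ∀ S T : Finset V, S ⊆ T → ∀ v : V, f (insert v S) + f T ≥ f (insert v T) + f S)
    {A T : Finset V} {v : V} (hmax : ∀ u : V, f (insert u A) ≤ f (insert v A)) :
    f T - f A ≤ T.card * (f (insert v A) - f A) :=
  calc f T - f A ≤ f (A ∪ T) - f A := by linarith [hmono T (A ∪ T) subset_union_right]
    _ ≤ ∑ u ∈ T, (f (insert u A) - f A) := by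
      linarith [le_add_sum_marginal_of_submodular f hsub A T]
    _ ≤ ∑ _u ∈ T, (f (insert v A) - f A) := sum_le_sum fun u _ => by linarith [hmax u]
    _ = T.card * (f (insert v A) - f A) := by rw [sum_const, nsmul_eq_mul]

theorem greedy_gap_le_one_sub_inv_card_mul
    (hmono : ∀ S T : Finset V, S ⊆ T → f S ≤ f T)
    (hsub : ∀ S T : Finset V, S ⊆ T → ∀ v : V, f (insert v S) + f T ≥ f (insert v T) + f S)
    {A T : Finset V} (hT : T.Nonempty) {v : V}
    (hmax : ∀ u : V, f (insert u A) ≤ f (insert v A)) :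
    f T - f (insert v A) ≤ (1 - 1 / T.card) * (f T - f A) := by
  have hcard : (0 : ℝ) < T.card := by exact_mod_cast hT.card_pos
  have hgain := sub_le_card_mul_greedy_gain f hmono hsub (T := T) hmax
  have : (f T - f A) / T.card ≤ f (insert v A) - f A := by rwa [div_le_iff₀' hcard]
  linarith [show (1 - 1 / (T.card : ℝ)) * (f T - f A) = f T - f A - (f T - f A) / T.card by ring]

end Submodular

theorem stmt9_general {V : Type*} [DecidableEq V]
    (f : Finset V → ℝ)
    (hmono : ∀ S T : Finset V, S ⊆ T → f S ≤ f T)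
    (hsub : ∀ S T : Finset V, S ⊆ T → ∀ v : V,
      f (insert v S) + f T ≥ f (insert v T) + f S)
    (hempty : f ∅ = 0)
    (b : ℕ) (hb : 1 ≤ b)
    (S : ℕ → Finset V) (hS0 : S 0 = ∅)
    (hgreedy : ∀ t < b, ∃ v : V, S (t + 1) = insert v (S t) ∧
      ∀ u : V, f (insert u (S t)) ≤ f (insert v (S t))) :
    ∀ T : Finset V, T.card = b → f (S b) ≥ (1 - 1 / Real.exp 1) * f T := by
  intro T hT
  have hbR : (1 : ℝ) ≤ b := by exact_mod_cast hb
  have hTne : T.Nonempty := card_pos.mp (hT ▸ hb)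
  have hdecay : f T - f (S b) ≤ (1 - 1 / (b : ℝ)) ^ b * (f T - f (S 0)) :=
    le_geom (u := fun t => f T - f (S t)) (sub_nonneg.mpr (div_le_one_of_le₀ hbR (by positivity))) b fun t ht => by
      obtain ⟨v, hv, hmax⟩ := hgreedy t ht
      simp only [hv, ← hT]
      exact greedy_gap_le_one_sub_inv_card_mul f hmono hsub hTne hmax
  have hexp : (1 - 1 / (b : ℝ)) ^ b ≤ Real.exp (-1) := Real.one_sub_div_pow_le_exp_neg hbR
  have hfT : 0 ≤ f T := hempty ▸ hmono ∅ T (empty_subset T)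
  rw [hS0, hempty, sub_zero] at hdecay
  rw [one_div, ← Real.exp_neg]
  nlinarith [mul_le_mul_of_nonneg_right hexp hfT]

/-- Let `V` be a finite type and `f : Finset V → ℝ` a monotone submodular
set function with `f ∅ = 0`.  Fix `b ≥ 1` and let the greedy sequence be `S 0 = ∅` and,
for `t < b`, `S (t+1) = S t ∪ {v_t}` where `v_t` maximizes `f (S t ∪ {v})` over all `v`.
Then for every `T ⊆ V` with `|T| = b`, `f (S b) ≥ (1 − 1/e) ⬝ f T`. -/
theorem stmt9 {V : Type*} [Fintype V] [DecidableEq V]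
    (f : Finset V → ℝ)
    (hmono : ∀ S T : Finset V, S ⊆ T → f S ≤ f T)
    (hsub : ∀ S T : Finset V, S ⊆ T → ∀ v : V,
      f (insert v S) + f T ≥ f (insert v T) + f S)
    (hempty : f ∅ = 0)
    (b : ℕ) (hb : 1 ≤ b)
    (S : ℕ → Finset V) (hS0 : S 0 = ∅)
    (hgreedy : ∀ t < b, ∃ v : V, S (t + 1) = insert v (S t) ∧
      ∀ u : V, f (insert u (S t)) ≤ f (insert v (S t))) :
    ∀ T : Finset V, T.card = b → f (S b) ≥ (1 - 1 / Real.exp 1) * f T :=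
  stmt9_general f hmono hsub hempty b hb S hS0 hgreedy
end

section
/- Let W be a finite type, b : W → ℝ≥0 with ∑_w b(w) ≤ 1, and κ ≥ 1. Let E₁, …, E_κ be independent random variables with values in Option W, each with distribution P(Eᵢ = some w) = b(w) for every w and P(Eᵢ = none) = 1 − ∑_w b(w). Let A₁, …, A_κ and B₁, …, B_κ be finite subsets of W with Aᵢ ∩ Bᵢ = ∅ and ∑_{w∈Bᵢ} b(w) < 1 for each i. Then P( ∃ i, Eᵢ ∈ some '' Aᵢ │ ∀ i, Eᵢ ∉ some '' Bᵢ ) = 1 − ∏_{i=1}^{κ} ( 1 − (∑_{w∈Aᵢ} b(w)) / (1 − ∑_{w∈Bᵢ} b(w)) ). -/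
/-!
Each `Eᵢ` takes finitely many values whose probabilities add up to `1`, so its fibres are
null-measurable although `Eᵢ` itself is not assumed measurable. Writing `αᵢ, βᵢ` for the weights
of `Aᵢ, Bᵢ`, independence gives `P(∀ i, Eᵢ ∉ some '' Bᵢ) = ∏ (1 - βᵢ)` and, since `Aᵢ ∩ Bᵢ = ∅`,
`P(∀ i, Eᵢ ∉ some '' (Aᵢ ∪ Bᵢ)) = ∏ (1 - αᵢ - βᵢ)`. The conditional probability of the
complementary event is the quotient of the two, which factors as `∏ (1 - αᵢ / (1 - βᵢ))`.
-/

open MeasureTheory ProbabilityTheory Set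
open scoped ENNReal NNReal

namespace MeasureTheory

variable {Ω α : Type*} [MeasurableSpace Ω] {μ : Measure Ω}

theorem nullMeasurableSet_of_measure_add_measure_compl_le [IsFiniteMeasure μ] {s : Set Ω}
    (h : μ s + μ sᶜ ≤ μ univ) : NullMeasurableSet s μ := by
  set t := toMeasurable μ s
  set u := toMeasurable μ sᶜ
  have htu : t ∪ u = univ :=
    eq_univ_of_forall fun ω ↦ (em (ω ∈ s)).imp (subset_toMeasurable μ s ·)
      (subset_toMeasurable μ sᶜ ·)
  -- `μ t + μ u ≤ μ (t ∪ u)` forces the overlap to be null; `s` and `uᶜ` differ only inside it.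
  have hnull : μ (t ∩ u) = 0 := by
    have key := measure_union_add_inter (μ := μ) t (measurableSet_toMeasurable μ sᶜ)
    rw [htu, measure_toMeasurable, measure_toMeasurable] at key
    refine nonpos_iff_eq_zero.mp ((ENNReal.add_le_add_iff_left (measure_ne_top μ univ)).mp ?_)
    rw [add_zero, key]
    exact h
  have hs : s = uᶜ ∪ (s ∩ u) := by
    have huc : uᶜ ⊆ s := compl_subset_comm.mp (subset_toMeasurable μ sᶜ)
    rw [union_inter_distrib_left, compl_union_self, inter_univ, union_eq_right.mpr huc]
  rw [hs]
  exact (measurableSet_toMeasurable μ sᶜ).compl.nullMeasurableSet.union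
    (.of_null (measure_mono_null (inter_subset_inter_left u (subset_toMeasurable μ s)) hnull))

theorem nullMeasurableSet_preimage_of_sum_measure_fiber_le [IsFiniteMeasure μ] [Fintype α]
    {X : Ω → α} (h : ∑ x, μ (X ⁻¹' {x}) ≤ μ univ) (s : Set α) :
    NullMeasurableSet (X ⁻¹' s) μ := by
  classical
  have hfiber (x : α) : NullMeasurableSet (X ⁻¹' {x}) μ := by
    refine nullMeasurableSet_of_measure_add_measure_compl_le ?_
    have hcompl : (X ⁻¹' {x})ᶜ = ⋃ y ∈ Finset.univ.erase x, X ⁻¹' {y} := by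
      ext ω
      simp [eq_comm]
    calc μ (X ⁻¹' {x}) + μ (X ⁻¹' {x})ᶜ
        ≤ μ (X ⁻¹' {x}) + ∑ y ∈ Finset.univ.erase x, μ (X ⁻¹' {y}) := by
          rw [hcompl]
          gcongr
          exact measure_biUnion_finset_le _ _
      _ = ∑ y, μ (X ⁻¹' {y}) :=
          Finset.add_sum_erase _ (fun y ↦ μ (X ⁻¹' {y})) (Finset.mem_univ x)
      _ ≤ μ univ := h
  rw [← biUnion_preimage_singleton]
  exact .biUnion s.to_countable fun x _ ↦ hfiber x

theorem sum_measure_preimage_singleton₀ (s : Finset α) {f : Ω → α}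
    (hf : ∀ y ∈ s, NullMeasurableSet (f ⁻¹' {y}) μ) :
    ∑ b ∈ s, μ (f ⁻¹' {b}) = μ (f ⁻¹' ↑s) := by
  rw [← measure_biUnion_finset₀
    (fun _ hx _ hy hxy ↦ (pairwiseDisjoint_fiber f s hx hy hxy).aedisjoint) hf,
    Finset.set_biUnion_preimage_singleton]

end MeasureTheory

namespace ProbabilityTheory

variable {Ω : Type*} [MeasurableSpace Ω] {μ : Measure Ω}

theorem cond_eq_ofReal_one_sub_div {s t : Set Ω} (ht : NullMeasurableSet t μ)
    (hst : NullMeasurableSet (sᶜ ∩ t) μ) {p q : ℝ} (hp : 0 < p) (hq : 0 ≤ q)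
    (hμt : μ t = ENNReal.ofReal p) (hμst : μ (sᶜ ∩ t) = ENNReal.ofReal q) :
    μ[s | t] = ENNReal.ofReal (1 - q / p) := by
  have hdiff : t \ (sᶜ ∩ t) = s ∩ t := by
    ext ω
    simp only [mem_sdiff, mem_inter_iff, mem_compl_iff]
    tauto
  have hμ : μ (s ∩ t) = ENNReal.ofReal (p - q) := by
    rw [← hdiff, measure_sdiff inter_subset_right hst (by simp [hμst]), hμt, hμst,
      ENNReal.ofReal_sub _ hq]
  rw [cond, Measure.smul_apply, smul_eq_mul, Measure.restrict_apply₀' ht, hμ, hμt,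
    ← ENNReal.ofReal_inv_of_pos hp, ← ENNReal.ofReal_mul (by positivity)]
  congr 1
  field_simp

end ProbabilityTheory

theorem Finset.prod_one_sub_div_one_sub {ι : Type*} (s : Finset ι) {a c : ι → ℝ}
    (hc : ∀ i ∈ s, c i ≠ 1) :
    ∏ i ∈ s, (1 - a i / (1 - c i)) = (∏ i ∈ s, (1 - a i - c i)) / ∏ i ∈ s, (1 - c i) := by
  rw [← Finset.prod_div_distrib]
  refine Finset.prod_congr rfl fun i hi ↦ ?_
  have : 1 - c i ≠ 0 := sub_ne_zero.mpr (hc i hi).symm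
  field_simp
  ring

section OptionValued

variable {Ω W : Type*} [MeasurableSpace Ω] {μ : Measure Ω} {b : W → ℝ≥0}

theorem nullMeasurableSet_preimage_of_measure_some_of_measure_none [IsProbabilityMeasure μ]
    [Fintype W] {X : Ω → Option W} (hb : ∑ w, b w ≤ 1)
    (hsome : ∀ w, μ {ω | X ω = some w} = b w)
    (hnone : μ {ω | X ω = none} = 1 - ∑ w, (b w : ℝ≥0∞)) (s : Set (Option W)) :
    NullMeasurableSet (X ⁻¹' s) μ := by
  refine nullMeasurableSet_preimage_of_sum_measure_fiber_le (le_of_eq ?_) s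
  have hb' : ∑ w, (b w : ℝ≥0∞) ≤ 1 := by exact_mod_cast hb
  calc ∑ x, μ (X ⁻¹' {x}) = 1 - ∑ w, (b w : ℝ≥0∞) + ∑ w, (b w : ℝ≥0∞) := by
        rw [Fintype.sum_option]
        exact congr_arg₂ (· + ·) hnone (Finset.sum_congr rfl fun w _ ↦ hsome w)
    _ = μ univ := by rw [tsub_add_cancel_of_le hb', measure_univ]

theorem measure_preimage_image_some {X : Ω → Option W}
    (hX : ∀ s, NullMeasurableSet (X ⁻¹' s) μ) (hsome : ∀ w, μ {ω | X ω = some w} = b w)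
    (C : Finset W) : μ (X ⁻¹' (some '' ↑C)) = ∑ w ∈ C, (b w : ℝ≥0∞) := by
  rw [show (some '' ↑C : Set (Option W)) = ↑(C.map .some) by simp,
    ← sum_measure_preimage_singleton₀ _ fun y _ ↦ hX {y}, Finset.sum_map]
  exact Finset.sum_congr rfl fun w _ ↦ hsome w

theorem measure_preimage_compl_image_some [IsProbabilityMeasure μ] {X : Ω → Option W}
    (hX : ∀ s, NullMeasurableSet (X ⁻¹' s) μ) (hsome : ∀ w, μ {ω | X ω = some w} = b w)
    (C : Finset W) :
    μ (X ⁻¹' (some '' ↑C)ᶜ) = ENNReal.ofReal (1 - ∑ w ∈ C, (b w : ℝ)) := by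
  rw [preimage_compl, prob_compl_eq_one_sub₀ (hX _), measure_preimage_image_some hX hsome,
    ENNReal.ofReal_sub _ (by positivity), ENNReal.ofReal_one,
    ENNReal.ofReal_sum_of_nonneg fun w _ ↦ (b w).coe_nonneg]
  simp

theorem measure_iInter_preimage_compl_image_some [IsProbabilityMeasure μ] {ι : Type*}
    [Fintype ι] {E : ι → Ω → Option W}
    (hindep : iIndepFun (m := fun _ ↦ (⊤ : MeasurableSpace (Option W))) E μ)
    (hE : ∀ i s, NullMeasurableSet (E i ⁻¹' s) μ)
    (hsome : ∀ i w, μ {ω | E i ω = some w} = b w)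
    (C : ι → Finset W) (hC : ∀ i, ∑ w ∈ C i, (b w : ℝ) ≤ 1) :
    μ (⋂ i, E i ⁻¹' (some '' ↑(C i))ᶜ) =
      ENNReal.ofReal (∏ i, (1 - ∑ w ∈ C i, (b w : ℝ))) := by
  have h := hindep.measure_inter_preimage_eq_mul Finset.univ
    (sets := fun i ↦ (some '' ↑(C i))ᶜ) fun _ _ ↦ MeasurableSpace.measurableSet_top
  simp only [Finset.mem_univ, iInter_true] at h
  rw [h, ENNReal.ofReal_prod_of_nonneg fun i _ ↦ sub_nonneg.mpr (hC i)]
  exact Finset.prod_congr rfl fun i _ ↦ measure_preimage_compl_image_some (hE i) (hsome i) (C i)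

end OptionValued

theorem stmt11_general {Ω : Type*} [MeasurableSpace Ω] (μ : Measure Ω) [IsProbabilityMeasure μ]
    {W : Type*} [Fintype W]
    (b : W → NNReal) (hb : ∑ w : W, b w ≤ 1)
    (κ : ℕ) (E : Fin κ → Ω → Option W)
    (hindep : iIndepFun (m := fun _ => (⊤ : MeasurableSpace (Option W))) E μ)
    (hsome : ∀ i w, μ {ω | E i ω = some w} = (b w : ENNReal))
    (hnone : ∀ i, μ {ω | E i ω = none} = 1 - ∑ w : W, (b w : ENNReal))
    (A B : Fin κ → Finset W)
    (hdisj : ∀ i, Disjoint (A i) (B i))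
    (hBlt : ∀ i, ∑ w ∈ B i, (b w : ℝ) < 1) :
    μ[{ω | ∃ i, E i ω ∈ Option.some '' (A i : Set W)} |
        {ω | ∀ i, E i ω ∉ Option.some '' (B i : Set W)}]
      = ENNReal.ofReal
          (1 - ∏ i : Fin κ,
            (1 - (∑ w ∈ A i, (b w : ℝ)) / (1 - ∑ w ∈ B i, (b w : ℝ)))) := by
  classical
  have hE i := nullMeasurableSet_preimage_of_measure_some_of_measure_none hb (hsome i) (hnone i)
  have hle_one (C : Finset W) : ∑ w ∈ C, (b w : ℝ) ≤ 1 :=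
    (Finset.sum_le_univ_sum_of_nonneg fun w ↦ (b w).coe_nonneg).trans (by exact_mod_cast hb)
  have hT : {ω | ∀ i, E i ω ∉ some '' (B i : Set W)} = ⋂ i, E i ⁻¹' (some '' ↑(B i))ᶜ := by
    ext ω
    simp
  have hST : {ω | ∃ i, E i ω ∈ some '' (A i : Set W)}ᶜ ∩
      {ω | ∀ i, E i ω ∉ some '' (B i : Set W)} = ⋂ i, E i ⁻¹' (some '' ↑(A i ∪ B i))ᶜ := by
    ext ω
    simp only [mem_inter_iff, mem_compl_iff, mem_ofPred_eq, not_exists, mem_iInter, mem_preimage,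
      Finset.coe_union, image_union, mem_union, not_or]
    exact forall_and.symm
  have hμ (C : Fin κ → Finset W) := measure_iInter_preimage_compl_image_some hindep hE hsome C
    fun _ ↦ hle_one _
  rw [cond_eq_ofReal_one_sub_div (by rw [hT]; exact .iInter fun i ↦ hE i _)
    (by rw [hST]; exact .iInter fun i ↦ hE i _)
    (Finset.prod_pos fun i _ ↦ sub_pos.mpr (hBlt i))
    (Finset.prod_nonneg fun i _ ↦ sub_nonneg.mpr (hle_one _)) (by rw [hT, hμ]) (by rw [hST, hμ]),
    Finset.prod_one_sub_div_one_sub _ fun i _ ↦ (hBlt i).ne]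
  simp_rw [Finset.sum_union (hdisj _), sub_add_eq_sub_sub]

/-- Let `W` be a finite type, `b : W → ℝ≥0` with `∑ b w ≤ 1`, and `κ ≥ 1`.
Let `E₁, …, E_κ` be independent `Option W`-valued random variables, each with
`P(Eᵢ = some w) = b w` and `P(Eᵢ = none) = 1 − ∑ b w`.  Let `Aᵢ, Bᵢ ⊆ W` be finite sets
with `Aᵢ ∩ Bᵢ = ∅` and `∑_{w ∈ Bᵢ} b w < 1`.  Then
`P(∃ i, Eᵢ ∈ some '' Aᵢ ∣ ∀ i, Eᵢ ∉ some '' Bᵢ)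
  = 1 − ∏ᵢ (1 − (∑_{w ∈ Aᵢ} b w) / (1 − ∑_{w ∈ Bᵢ} b w))`. -/
theorem stmt11 {Ω : Type*} [MeasurableSpace Ω] (μ : Measure Ω) [IsProbabilityMeasure μ]
    {W : Type*} [Fintype W] [DecidableEq W]
    (b : W → NNReal) (hb : ∑ w : W, b w ≤ 1)
    (κ : ℕ) (hκ : 1 ≤ κ) (E : Fin κ → Ω → Option W)
    (hindep : iIndepFun (m := fun _ => (⊤ : MeasurableSpace (Option W))) E μ)
    (hsome : ∀ i w, μ {ω | E i ω = some w} = (b w : ENNReal))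
    (hnone : ∀ i, μ {ω | E i ω = none} = 1 - ∑ w : W, (b w : ENNReal))
    (A B : Fin κ → Finset W)
    (hdisj : ∀ i, Disjoint (A i) (B i))
    (hBlt : ∀ i, ∑ w ∈ B i, (b w : ℝ) < 1) :
    μ[{ω | ∃ i, E i ω ∈ Option.some '' (A i : Set W)} |
        {ω | ∀ i, E i ω ∉ Option.some '' (B i : Set W)}]
      = ENNReal.ofReal
          (1 - ∏ i : Fin κ,
            (1 - (∑ w ∈ A i, (b w : ℝ)) / (1 - ∑ w ∈ B i, (b w : ℝ)))) :=
  stmt11_general μ b hb κ E hindep hsome hnone A B hdisj hBlt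
end
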